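/- Let n ≥ 3 be an integer, p ∈ (0,1), and α = (1+(n−1)p)/(1−p). In the malicious Bayesian congestion game Ψ(α,n,p), the pure strategy profile σ defined by σ(u^s) = s_u^2 and σ(u^m) = s_u^3 for every player u is a pure Bayesian Nash equilibrium, and its social cost equals SC(Ψ(α,n,p),σ) = (2(1−p)(2+(n−2)p) + (1+(n−1)p)²) / (1−p). -/

import Mathlib

open Finset

/-- The data of a malicious Bayesian congestion game: strategy sets (sets of
nonempty subsets of resources), type probabilities, latency functions. -/
structure Game (N E : Type) where
  S : N → Finset (Finset E)
  p : N → ℝ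
  f : E → ℝ → ℝ

namespace Game

variable {N E : Type} [Fintype N] [DecidableEq N] [Fintype E] [DecidableEq E]

/-- A pure strategy profile: each player chooses a pair (selfish strategy, malicious strategy). -/
abbrev Profile (N E : Type) := N → Finset E × Finset E

/-- Validity: both type-agents of each player choose strategies from the player's strategy set. -/
def Valid (G : Game N E) (σ : Profile N E) : Prop :=
  ∀ u, (σ u).1 ∈ G.S u ∧ (σ u).2 ∈ G.S u

/-- Expected selfish load on resource `e`, with player `u` omitted. -/
noncomputable def selfLoadEx (G : Game N E) (σ : Profile N E) (u : N) (e : E) : ℝ :=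
  ∑ v ∈ Finset.univ.erase u, if e ∈ (σ v).1 then 1 - G.p v else 0

/-- Expected malicious load on resource `e`, with player `u` omitted. -/
noncomputable def malLoadEx (G : Game N E) (σ : Profile N E) (u : N) (e : E) : ℝ :=
  ∑ v ∈ Finset.univ.erase u, if e ∈ (σ v).2 then G.p v else 0

/-- Private (expected) cost of player `u` in the pure profile `σ`. -/
noncomputable def PC (G : Game N E) (σ : Profile N E) (u : N) : ℝ :=
  ∑ e ∈ (σ u).1, G.f e (G.selfLoadEx σ u e + G.malLoadEx σ u e + 1)

/-- Social cost of a pure profile: weighted average latency of the selfish type-agents. -/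
noncomputable def SC (G : Game N E) (σ : Profile N E) : ℝ :=
  (∑ u, (1 - G.p u) * G.PC σ u) / ((Fintype.card N : ℝ) - ∑ u, G.p u)

/-- Replace the selfish strategy of player `u` by `t`. -/
def updS (σ : Profile N E) (u : N) (t : Finset E) : Profile N E :=
  Function.update σ u (t, (σ u).2)

/-- Replace the malicious strategy of player `u` by `t`. -/
def updM (σ : Profile N E) (u : N) (t : Finset E) : Profile N E :=
  Function.update σ u ((σ u).1, t)

/-- Pure Bayesian Nash equilibrium: no selfish type-agent can decrease its private cost and
no malicious type-agent can increase the social cost by a unilateral deviation. -/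
def IsPureBNE (G : Game N E) (σ : Profile N E) : Prop :=
  G.Valid σ ∧ ∀ u : N, ∀ t ∈ G.S u,
    G.PC σ u ≤ G.PC (updS σ u t) u ∧ G.SC (updM σ u t) ≤ G.SC σ

end Game
/-- Resources of the example game `Ψ(α,n,p)`: `g_1,…,g_n` and `h_1,…,h_n`
(indices modulo `n`). -/
inductive ResEx (n : ℕ) where
  | g (i : Fin n)
  | h (i : Fin n)
deriving DecidableEq, Fintype

/-- The strategy `s_u^1 = {g_u, h_u}`. -/
def exS1 {n : ℕ} (u : Fin n) : Finset (ResEx n) := {ResEx.g u, ResEx.h u}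

/-- The strategy `s_u^2 = {g_{u+1}, h_{u+1}, h_{u+2}}` (indices modulo `n`). -/
def exS2 {n : ℕ} [NeZero n] (u : Fin n) : Finset (ResEx n) :=
  {ResEx.g (u + 1), ResEx.h (u + 1), ResEx.h (u + 2)}

/-- The strategy `s_u^3 = E`. -/
def exS3 (n : ℕ) : Finset (ResEx n) := Finset.univ

/-- The example game `Ψ(α,n,p)`: `n` players, resources `g_i` with latency `α·x` and
`h_i` with latency `x`, strategy sets `{s_u^1, s_u^2, s_u^3}` and identical type
probability `p`. -/
noncomputable def ExGame (n : ℕ) [NeZero n] (α p : ℝ) : Game (Fin n) (ResEx n) where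
  S := fun u => {exS1 u, exS2 u, exS3 n}
  p := fun _ => p
  f := fun e x => match e with
    | .g _ => α * x
    | .h _ => x

-- ==================== auxiliary lemmas ====================

lemma mem_exS2_g {m : ℕ} (i v : Fin (m+3)) : ResEx.g i ∈ exS2 v ↔ v = i - 1 := by
  simp [exS2, eq_sub_iff_add_eq, eq_comm]

lemma mem_exS2_h {m : ℕ} (i v : Fin (m+3)) :
    ResEx.h i ∈ exS2 v ↔ v = i - 1 ∨ v = i - 2 := by
  simp [exS2, eq_sub_iff_add_eq, eq_comm]

/-- The profile under consideration. -/
def Sig (m : ℕ) : Game.Profile (Fin (m+3)) (ResEx (m+3)) :=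
  fun u => (exS2 u, exS3 (m+3))

section Loads
variable {m : ℕ} (α p : ℝ)

lemma mal_eq (u : Fin (m+3)) (e : ResEx (m+3)) :
    (ExGame (m+3) α p).malLoadEx (Sig m) u e = ((m:ℝ)+2) * p := by
  unfold Game.malLoadEx
  simp [Sig, ExGame, exS3, Finset.card_erase_of_mem]

lemma self_g (u i : Fin (m+3)) :
    (ExGame (m+3) α p).selfLoadEx (Sig m) u (ResEx.g i) =
      if i = u + 1 then 0 else 1 - p := by
  unfold Game.selfLoadEx
  simp only [Sig, ExGame, mem_exS2_g, Finset.sum_ite_eq', Finset.mem_erase,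
    Finset.mem_univ, and_true]
  by_cases h : i = u + 1
  · subst h; simp [add_sub_cancel_right]
  · have : i - 1 ≠ u := fun hc => h (by rw [← hc]; abel)
    simp [this, h]

lemma self_h (u i : Fin (m+3)) :
    (ExGame (m+3) α p).selfLoadEx (Sig m) u (ResEx.h i) =
      (if i = u + 1 then 0 else 1 - p) + (if i = u + 2 then 0 else 1 - p) := by
  unfold Game.selfLoadEx
  have hne : i - 1 ≠ i - 2 := by
    intro hc
    have : (1 : Fin (m+3)) = 2 := by
      have := sub_right_injective hc; exact this
    simp [Fin.ext_iff, Nat.mod_eq_of_lt (show 2 < m + 3 by omega)] at this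
  have key : ∀ v : Fin (m+3),
      (if ResEx.h i ∈ (Sig m v).1 then 1 - (ExGame (m+3) α p).p v else 0) =
      (if v = i - 1 then 1 - p else 0) + (if v = i - 2 then 1 - p else 0) := by
    intro v
    simp only [Sig, ExGame, mem_exS2_h]
    by_cases h1 : v = i - 1 <;> by_cases h2 : v = i - 2 <;> simp_all
  rw [Finset.sum_congr rfl (fun v _ => key v), Finset.sum_add_distrib]
  simp only [Finset.sum_ite_eq', Finset.mem_erase, Finset.mem_univ, and_true]
  have c1 : (i - 1 ≠ u) ↔ ¬ (i = u + 1) := by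
    constructor
    · intro h hc; subst hc; exact h (by abel)
    · intro h hc; exact h (by rw [← hc]; abel)
  have c2 : (i - 2 ≠ u) ↔ ¬ (i = u + 2) := by
    constructor
    · intro h hc; subst hc; exact h (by abel)
    · intro h hc; exact h (by rw [← hc]; abel)
  by_cases h1 : i = u + 1 <;> by_cases h2 : i = u + 2 <;>
    simp_all [c1, c2]
end Loads

section Main
variable {m : ℕ} (α p : ℝ)

lemma updM_fst (σ : Game.Profile (Fin (m+3)) (ResEx (m+3))) (u : Fin (m+3))
    (t : Finset (ResEx (m+3))) (w : Fin (m+3)) :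
    (Game.updM σ u t w).1 = (σ w).1 := by
  unfold Game.updM
  by_cases h : w = u
  · subst h; simp
  · rw [Function.update_of_ne h]

lemma selfLoadEx_congr_fst (σ σ' : Game.Profile (Fin (m+3)) (ResEx (m+3)))
    (h : ∀ w, (σ' w).1 = (σ w).1) (u : Fin (m+3)) (e : ResEx (m+3)) :
    (ExGame (m+3) α p).selfLoadEx σ' u e = (ExGame (m+3) α p).selfLoadEx σ u e := by
  unfold Game.selfLoadEx
  exact Finset.sum_congr rfl fun v _ => by rw [h v]

lemma selfLoadEx_updS (σ : Game.Profile (Fin (m+3)) (ResEx (m+3))) (u : Fin (m+3))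
    (t : Finset (ResEx (m+3))) (e : ResEx (m+3)) :
    (ExGame (m+3) α p).selfLoadEx (Game.updS σ u t) u e
      = (ExGame (m+3) α p).selfLoadEx σ u e := by
  unfold Game.selfLoadEx
  exact Finset.sum_congr rfl fun v hv => by
    rw [Game.updS, Function.update_of_ne (Finset.ne_of_mem_erase hv)]

lemma malLoadEx_updS (σ : Game.Profile (Fin (m+3)) (ResEx (m+3))) (u : Fin (m+3))
    (t : Finset (ResEx (m+3))) (e : ResEx (m+3)) :
    (ExGame (m+3) α p).malLoadEx (Game.updS σ u t) u e
      = (ExGame (m+3) α p).malLoadEx σ u e := by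
  unfold Game.malLoadEx
  exact Finset.sum_congr rfl fun v hv => by
    rw [Game.updS, Function.update_of_ne (Finset.ne_of_mem_erase hv)]

lemma PC_updS (u : Fin (m+3)) (t : Finset (ResEx (m+3))) :
    (ExGame (m+3) α p).PC (Game.updS (Sig m) u t) u
      = ∑ e ∈ t, (ExGame (m+3) α p).f e
          ((ExGame (m+3) α p).selfLoadEx (Sig m) u e
            + (ExGame (m+3) α p).malLoadEx (Sig m) u e + 1) := by
  unfold Game.PC
  have h1 : (Game.updS (Sig m) u t u).1 = t := by simp [Game.updS]
  rw [h1]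
  exact Finset.sum_congr rfl fun e _ => by
    rw [selfLoadEx_updS, malLoadEx_updS]

lemma fin_ne1 (u : Fin (m+3)) : u ≠ u + 1 := by
  intro h
  have : (1 : Fin (m+3)) = 0 := by
    have := (left_eq_add).mp h; exact this
  simp [Fin.ext_iff] at this

lemma fin_ne2 (u : Fin (m+3)) : u ≠ u + 2 := by
  intro h
  have : (2 : Fin (m+3)) = 0 := by
    have := (left_eq_add).mp h; exact this
  simp [Fin.ext_iff, Nat.mod_eq_of_lt (show 2 < m + 3 by omega)] at this

lemma fin_ne12 (u : Fin (m+3)) : u + 1 ≠ u + 2 := by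
  intro h
  have h2 : (1 : Fin (m+3)) = 2 := add_left_cancel h
  simp [Fin.ext_iff, Nat.mod_eq_of_lt (show 2 < m + 3 by omega)] at h2

lemma sum_exS2 (u : Fin (m+3)) :
    (∑ e ∈ exS2 u, (ExGame (m+3) α p).f e
        ((ExGame (m+3) α p).selfLoadEx (Sig m) u e
          + (ExGame (m+3) α p).malLoadEx (Sig m) u e + 1))
      = α * (1 + ((m:ℝ)+2)*p) + 2*(2 + ((m:ℝ)+1)*p) := by
  have h12 := fin_ne12 u
  rw [show exS2 u = insert (ResEx.g (u+1)) (insert (ResEx.h (u+1)) {ResEx.h (u+2)}) from rfl,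
    Finset.sum_insert (by simp), Finset.sum_insert (by simp [h12]), Finset.sum_singleton]
  simp only [self_g, self_h, mal_eq]
  simp only [ExGame]
  simp only [if_true, if_neg h12, if_neg (Ne.symm h12)]
  ring

lemma PC_val (u : Fin (m+3)) :
    (ExGame (m+3) α p).PC (Sig m) u
      = α * (1 + ((m:ℝ)+2)*p) + 2*(2 + ((m:ℝ)+1)*p) := by
  unfold Game.PC
  exact sum_exS2 α p u

lemma sum_exS1 (u : Fin (m+3)) :
    (∑ e ∈ exS1 u, (ExGame (m+3) α p).f e
        ((ExGame (m+3) α p).selfLoadEx (Sig m) u e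
          + (ExGame (m+3) α p).malLoadEx (Sig m) u e + 1))
      = α * (2 + ((m:ℝ)+1)*p) + (3 + (m:ℝ)*p) := by
  have h1 := fin_ne1 u
  have h2 := fin_ne2 u
  rw [show exS1 u = insert (ResEx.g u) {ResEx.h u} from rfl,
    Finset.sum_insert (by simp), Finset.sum_singleton]
  simp only [self_g, self_h, mal_eq]
  simp only [ExGame]
  simp only [if_neg h1, if_neg h2]
  ring

lemma term_nonneg (hα : 0 ≤ α) (hp0 : 0 < p) (hp1 : p < 1) (u : Fin (m+3))
    (e : ResEx (m+3)) :
    0 ≤ (ExGame (m+3) α p).f e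
        ((ExGame (m+3) α p).selfLoadEx (Sig m) u e
          + (ExGame (m+3) α p).malLoadEx (Sig m) u e + 1) := by
  have hm : (0:ℝ) ≤ (m:ℝ) := Nat.cast_nonneg m
  cases e with
  | g i =>
    simp only [self_g, mal_eq]
    simp only [ExGame]
    apply mul_nonneg hα
    split_ifs <;> nlinarith
  | h i =>
    simp only [self_h, mal_eq]
    simp only [ExGame]
    split_ifs <;> nlinarith

lemma PC_mono (hα : 0 ≤ α) (hp0 : 0 < p) (u v : Fin (m+3)) (t : Finset (ResEx (m+3))) :
    (ExGame (m+3) α p).PC (Game.updM (Sig m) u t) v ≤ (ExGame (m+3) α p).PC (Sig m) v := by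
  unfold Game.PC
  rw [updM_fst]
  refine Finset.sum_le_sum fun e _ => ?_
  have hself := selfLoadEx_congr_fst α p (Sig m) (Game.updM (Sig m) u t)
    (updM_fst (Sig m) u t) v e
  have hmal : (ExGame (m+3) α p).malLoadEx (Game.updM (Sig m) u t) v e
      ≤ (ExGame (m+3) α p).malLoadEx (Sig m) v e := by
    unfold Game.malLoadEx
    refine Finset.sum_le_sum fun w _ => ?_
    by_cases h : w = u
    · subst h
      simp only [Game.updM, Function.update_self, Sig, ExGame, exS3, Finset.mem_univ,
        if_true]
      split_ifs <;> linarith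
    · rw [Game.updM, Function.update_of_ne h]
  have harg : (ExGame (m+3) α p).selfLoadEx (Game.updM (Sig m) u t) v e
        + (ExGame (m+3) α p).malLoadEx (Game.updM (Sig m) u t) v e + 1
      ≤ (ExGame (m+3) α p).selfLoadEx (Sig m) v e
        + (ExGame (m+3) α p).malLoadEx (Sig m) v e + 1 := by
    rw [hself]; linarith
  cases e with
  | g i => exact mul_le_mul_of_nonneg_left harg hα
  | h i => exact harg

end Main

theorem exGame_s2_s3_is_pure_BNE_and_social_cost
    (n : ℕ) [NeZero n] (hn : 3 ≤ n) (p : ℝ) (hp0 : 0 < p) (hp1 : p < 1) :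
    (ExGame n ((1 + ((n : ℝ) - 1) * p) / (1 - p)) p).IsPureBNE
        (fun u => (exS2 u, exS3 n)) ∧
    (ExGame n ((1 + ((n : ℝ) - 1) * p) / (1 - p)) p).SC (fun u => (exS2 u, exS3 n)) =
      (2 * (1 - p) * (2 + ((n : ℝ) - 2) * p) + (1 + ((n : ℝ) - 1) * p) ^ 2) / (1 - p) := by
  obtain ⟨m, rfl⟩ : ∃ m, n = m + 3 := ⟨n - 3, by omega⟩
  set α : ℝ := (1 + (((m+3 : ℕ) : ℝ) - 1) * p) / (1 - p) with hαdef
  have hp1' : (0:ℝ) < 1 - p := by linarith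
  have hm : (0:ℝ) ≤ (m:ℝ) := Nat.cast_nonneg m
  have hcast : ((m+3 : ℕ) : ℝ) = (m:ℝ) + 3 := by push_cast; ring
  have hα : 0 ≤ α := by
    apply div_nonneg _ (le_of_lt hp1')
    rw [hcast]; nlinarith
  have hαeq : α * (1 - p) = 1 + ((m:ℝ)+2) * p := by
    rw [hαdef, div_mul_cancel₀ _ (ne_of_gt hp1'), hcast]; ring
  have hσ : (fun u : Fin (m+3) => (exS2 u, exS3 (m+3))) = Sig m := rfl
  rw [hσ]
  have hcard : ((Fintype.card (Fin (m+3)) : ℝ) - ∑ u : Fin (m+3), (ExGame (m+3) α p).p u)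
      = ((m:ℝ)+3) * (1 - p) := by
    simp [ExGame, Finset.sum_const, Fintype.card_fin]
    push_cast; ring
  have hd : (0:ℝ) < ((m:ℝ)+3) * (1 - p) := mul_pos (by positivity) hp1'
  have hSCval : (ExGame (m+3) α p).SC (Sig m)
      = α * (1 + ((m:ℝ)+2)*p) + 2*(2 + ((m:ℝ)+1)*p) := by
    unfold Game.SC
    rw [hcard]
    have hterm : ∀ u : Fin (m+3),
        (1 - (ExGame (m+3) α p).p u) * (ExGame (m+3) α p).PC (Sig m) u
          = (1-p) * (α * (1 + ((m:ℝ)+2)*p) + 2*(2 + ((m:ℝ)+1)*p)) := fun u => by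
      rw [PC_val]; rfl
    rw [Finset.sum_congr rfl fun u _ => hterm u, Finset.sum_const, Finset.card_univ,
      Fintype.card_fin, nsmul_eq_mul, hcast]
    rw [show ((m:ℝ)+3) * ((1-p) * (α * (1 + ((m:ℝ)+2)*p) + 2*(2 + ((m:ℝ)+1)*p)))
        = (((m:ℝ)+3)*(1-p)) * (α * (1 + ((m:ℝ)+2)*p) + 2*(2 + ((m:ℝ)+1)*p)) from by ring]
    exact mul_div_cancel_left₀ _ (ne_of_gt hd)
  refine ⟨⟨fun u => ⟨by simp [ExGame, Sig], by simp [ExGame, Sig]⟩, fun u t ht => ?_⟩, ?_⟩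
  · have ht' : t = exS1 u ∨ t = exS2 u ∨ t = exS3 (m+3) := by
      simpa [ExGame] using ht
    constructor
    · -- private cost part
      rw [PC_updS, PC_val]
      rcases ht' with rfl | rfl | rfl
      · rw [sum_exS1]
        have hr : α * (2 + ((m:ℝ)+1)*p) - α * (1 + ((m:ℝ)+2)*p) = α * (1-p) := by ring
        linarith [hαeq, hr]
      · rw [sum_exS2]
      · rw [← sum_exS2 α p u]
        exact Finset.sum_le_sum_of_subset_of_nonneg (Finset.subset_univ _)
          (fun e _ _ => term_nonneg α p hα hp0 hp1 u e)
    · -- social cost part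
      unfold Game.SC
      rw [hcard]
      refine (div_le_div_iff_of_pos_right hd).mpr (Finset.sum_le_sum fun v _ => ?_)
      have h0 : (0:ℝ) ≤ 1 - (ExGame (m+3) α p).p v := le_of_lt hp1'
      exact mul_le_mul_of_nonneg_left (PC_mono α p hα hp0 u v t) h0
  · rw [hSCval, hαdef, hcast]
    push_cast
    field_simp
    ring
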